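/- Let $A, B$ be positive semidefinite operators on a finite-dimensional Hilbert space with $A$ of rank one. Then $\frac{1}{2}\operatorname{Tr}(A+B) - \frac{1}{2}\|A-B\|_1 \le \frac{1}{\operatorname{Tr} A} F(A,B)^2$, where $F(A,B) = \|A^{1/2}B^{1/2}\|_1$ and $A$ is assumed nonzero. -/

import Mathlib

open Matrix
open scoped ComplexOrder

/-- The square root of a positive semidefinite matrix, as `Matrix.PosSemidef.sqrt` was defined
in Mathlib of December 2024 (that declaration has since been removed). -/
noncomputable def posSemidefSqrtOld {m : ℕ} {A : Matrix (Fin m) (Fin m) ℂ} (hA : A.PosSemidef) :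
    Matrix (Fin m) (Fin m) ℂ :=
  hA.1.eigenvectorUnitary.1 * diagonal ((↑) ∘ (√·) ∘ hA.1.eigenvalues) *
    (star hA.1.eigenvectorUnitary : Matrix (Fin m) (Fin m) ℂ)

noncomputable def matAbs {m : ℕ} (A : Matrix (Fin m) (Fin m) ℂ) : Matrix (Fin m) (Fin m) ℂ :=
  posSemidefSqrtOld (Matrix.posSemidef_conjTranspose_mul_self A)

noncomputable def traceNorm {m : ℕ} (A : Matrix (Fin m) (Fin m) ℂ) : ℝ :=
  ((matAbs A).trace).re

open Classical in
noncomputable def psdSqrt {m : ℕ} (A : Matrix (Fin m) (Fin m) ℂ) : Matrix (Fin m) (Fin m) ℂ :=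
  if h : A.PosSemidef then posSemidefSqrtOld h else 0

noncomputable def fid {m : ℕ} (A B : Matrix (Fin m) (Fin m) ℂ) : ℝ :=
  traceNorm (psdSqrt A * psdSqrt B)

noncomputable def matPosPart {m : ℕ} (A : Matrix (Fin m) (Fin m) ℂ) : Matrix (Fin m) (Fin m) ℂ :=
  (2⁻¹ : ℂ) • (matAbs A + A)

noncomputable def matNegPart {m : ℕ} (A : Matrix (Fin m) (Fin m) ℂ) : Matrix (Fin m) (Fin m) ℂ :=
  (2⁻¹ : ℂ) • (matAbs A - A)

/-!
For `0 ≤ E ≤ 1`, writing `A - B = D⁺ - D⁻` with `|A - B| = D⁺ + D⁻`, one has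
`½ Tr (A + B) - ½ ‖A - B‖₁ = Tr (A (1 - E)) + Tr (B E) - Tr (D⁺ (1 - E)) - Tr (D⁻ E)`,
and both subtracted traces are traces of products of positive matrices, hence nonnegative.
Since `A² = (Tr A) A` for `A` of rank one, `E = A / Tr A` is a projection with `A (1 - E) = 0`,
so the bound becomes `Tr (A B) / Tr A`. Finally, with `M = √A √B`,
`Tr (A B) = Tr (M⋆ M) = Tr |M|² ≤ (Tr |M|)² = F(A, B)²`.
-/

open scoped MatrixOrder

lemma IsSelfAdjoint.isStarProjection_inv_smul {R : Type*} [Ring R] [StarRing R] [Module ℝ R]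
    [StarModule ℝ R] [IsScalarTower ℝ R R] [SMulCommClass ℝ R R] {a : R} (ha : IsSelfAdjoint a)
    {t : ℝ} (h : a * a = t • a) : IsStarProjection (t⁻¹ • a) where
  isIdempotentElem := by
    rcases eq_or_ne t 0 with rfl | ht
    · simp [IsIdempotentElem]
    · rw [IsIdempotentElem, smul_mul_smul_comm, h, smul_smul, inv_mul_cancel_right₀ ht]
  isSelfAdjoint := (IsSelfAdjoint.all t⁻¹).smul ha

namespace Matrix

variable {n 𝕜 : Type*} [Fintype n] [DecidableEq n] [RCLike 𝕜]

lemma trace_mul_nonneg {X Y : Matrix n n 𝕜} (hX : 0 ≤ X) (hY : 0 ≤ Y) :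
    0 ≤ (X * Y).trace := by
  have hconj : 0 ≤ CFC.sqrt X * Y * CFC.sqrt X :=
    conjugate_nonneg_of_nonneg hY (CFC.sqrt_nonneg X)
  rw [← CFC.sqrt_mul_sqrt_self X, mul_assoc, trace_mul_comm]
  exact hconj.posSemidef.trace_nonneg

lemma re_trace_mul_self_le_sq {X : Matrix n n 𝕜} (hX : 0 ≤ X) :
    RCLike.re (X * X).trace ≤ RCLike.re X.trace ^ 2 := by
  have hX' := hX.posSemidef
  have hXX : (X * X).trace = ∑ i, ((hX'.1.eigenvalues i ^ 2 : ℝ) : 𝕜) := by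
    conv_lhs => rw [hX'.1.spectral_theorem, ← map_mul, Unitary.conjStarAlgAut_apply,
      trace_mul_cycle, Unitary.coe_star_mul_self, one_mul, diagonal_mul_diagonal, trace_diagonal]
    simp [sq]
  rw [hXX, hX'.1.trace_eq_sum_eigenvalues]
  simp only [map_sum, RCLike.ofReal_re]
  exact Finset.sum_sq_le_sq_sum_of_nonneg fun i _ => hX'.eigenvalues_nonneg i

lemma re_trace_mul_le_sq_re_trace_abs_sqrt_mul_sqrt {A B : Matrix n n 𝕜} (hA : 0 ≤ A)
    (hB : 0 ≤ B) :
    RCLike.re (A * B).trace ≤ RCLike.re (CFC.abs (CFC.sqrt A * CFC.sqrt B)).trace ^ 2 := by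
  have hstar : star (CFC.sqrt A * CFC.sqrt B) * (CFC.sqrt A * CFC.sqrt B) =
      CFC.sqrt B * A * CFC.sqrt B := by
    rw [star_mul, (CFC.sqrt_nonneg A).isSelfAdjoint.star_eq,
      (CFC.sqrt_nonneg B).isSelfAdjoint.star_eq, mul_assoc, ← mul_assoc (CFC.sqrt A),
      CFC.sqrt_mul_sqrt_self A, ← mul_assoc]
  have htr : (CFC.sqrt B * A * CFC.sqrt B).trace = (A * B).trace := by
    rw [trace_mul_cycle, CFC.sqrt_mul_sqrt_self B, trace_mul_comm]
  have := re_trace_mul_self_le_sq (CFC.abs_nonneg (CFC.sqrt A * CFC.sqrt B))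
  rwa [CFC.abs_mul_abs, hstar, htr] at this

lemma IsHermitian.mul_self_eq_re_trace_smul_of_rank_eq_one {A : Matrix n n 𝕜}
    (hA : A.IsHermitian) (hrank : A.rank = 1) : A * A = RCLike.re A.trace • A := by
  obtain ⟨⟨i, hi⟩, hunique⟩ :=
    Fintype.card_eq_one_iff.mp (hA.rank_eq_card_non_zero_eigs ▸ hrank)
  have heig : ∀ j, hA.eigenvalues j ≠ 0 → j = i :=
    fun j hj => congrArg Subtype.val (hunique ⟨j, hj⟩)
  have htr : RCLike.re A.trace = hA.eigenvalues i := by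
    rw [hA.trace_eq_sum_eigenvalues, map_sum]
    simp only [RCLike.ofReal_re]
    exact Finset.sum_eq_single i (fun j _ hj => by_contra fun h => hj (heig j h)) (by simp)
  have hsa : IsSelfAdjoint A := hA
  calc A * A = cfc (fun x : ℝ => x * x) A := by rw [cfc_mul .., cfc_id' ..]
    _ = cfc (fun x : ℝ => RCLike.re A.trace * x) A := by
      refine cfc_congr fun x hx => ?_
      obtain ⟨j, rfl⟩ : x ∈ Set.range hA.eigenvalues :=
        hA.spectrum_real_eq_range_eigenvalues ▸ hx
      by_cases hj : hA.eigenvalues j = 0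
      · simp [hj]
      · rw [heig j hj, htr]
    _ = RCLike.re A.trace • A := by rw [cfc_const_mul .., cfc_id' ..]

theorem re_trace_add_sub_re_trace_abs_sub_le {A B E : Matrix n n 𝕜} (hAB : IsSelfAdjoint (A - B))
    (hE₀ : 0 ≤ E) (hE₁ : E ≤ 1) :
    RCLike.re (A + B).trace / 2 - RCLike.re (CFC.abs (A - B)).trace / 2 ≤
      RCLike.re (A * (1 - E)).trace + RCLike.re (B * E).trace := by
  obtain ⟨P, N, hP, hN, hPN, habs⟩ : ∃ P N : Matrix n n 𝕜,
      0 ≤ P ∧ 0 ≤ N ∧ A - B = P - N ∧ CFC.abs (A - B) = P + N :=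
    ⟨_, _, CFC.posPart_nonneg _, CFC.negPart_nonneg _, (CFC.posPart_sub_negPart _ hAB).symm,
      (CFC.posPart_add_negPart _ hAB).symm⟩
  rw [habs]
  obtain rfl : B = A - P + N := by rw [← sub_sub_cancel A B, hPN]; abel
  have hP' := (RCLike.nonneg_iff.mp (trace_mul_nonneg hP (sub_nonneg.2 hE₁))).1
  have hN' := (RCLike.nonneg_iff.mp (trace_mul_nonneg hN hE₀)).1
  simp only [add_mul, sub_mul, mul_sub, mul_one, trace_add, trace_sub, map_add, map_sub] at hP' hN' ⊢
  linarith

end Matrix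

lemma posSemidefSqrtOld_eq_sqrt {m : ℕ} {A : Matrix (Fin m) (Fin m) ℂ} (hA : A.PosSemidef) :
    posSemidefSqrtOld hA = CFC.sqrt A := by
  rw [CFC.sqrt_eq_real_sqrt A hA.nonneg, cfcₙ_eq_cfc, hA.1.cfc_eq, IsHermitian.cfc,
    Unitary.conjStarAlgAut_apply]
  rfl

lemma traceNorm_eq_re_trace_abs {m : ℕ} (M : Matrix (Fin m) (Fin m) ℂ) :
    traceNorm M = (CFC.abs M).trace.re := by
  rw [traceNorm, matAbs, posSemidefSqrtOld_eq_sqrt]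
  rfl

lemma re_trace_mul_le_fid_sq {m : ℕ} {A B : Matrix (Fin m) (Fin m) ℂ} (hA : A.PosSemidef)
    (hB : B.PosSemidef) : (A * B).trace.re ≤ fid A B ^ 2 := by
  rw [fid, psdSqrt, psdSqrt, dif_pos hA, dif_pos hB, posSemidefSqrtOld_eq_sqrt,
    posSemidefSqrtOld_eq_sqrt, traceNorm_eq_re_trace_abs]
  exact re_trace_mul_le_sq_re_trace_abs_sqrt_mul_sqrt hA.nonneg hB.nonneg

theorem rank_one_fidelity_sq_bound {d : ℕ} (A B : Matrix (Fin d) (Fin d) ℂ)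
    (hA : A.PosSemidef) (hB : B.PosSemidef) (hrank : A.rank = 1) :
    (1/2) * (((A + B).trace).re) - (1/2) * traceNorm (A - B) ≤
      ((A.trace).re)⁻¹ * fid A B ^ 2 := by
  set a := A.trace.re
  have hAA : A * A = a • A := hA.1.mul_self_eq_re_trace_smul_of_rank_eq_one hrank
  have hP := hA.1.isSelfAdjoint.isStarProjection_inv_smul hAA
  have hhelstrom := re_trace_add_sub_re_trace_abs_sub_le (hA.1.sub hB.1) hP.nonneg hP.le_one
  have hAP : (A * (1 - a⁻¹ • A)).trace.re = 0 := by
    rw [mul_sub, mul_one, mul_smul_comm, hAA, smul_smul, trace_sub, trace_smul]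
    simp only [Complex.sub_re, Complex.real_smul, Complex.re_ofReal_mul]
    rw [inv_mul_mul_self, sub_self]
  have hBP : (B * (a⁻¹ • A)).trace.re = a⁻¹ * (A * B).trace.re := by
    rw [mul_smul_comm, trace_smul, trace_mul_comm]
    simp
  have ha : 0 ≤ a⁻¹ := inv_nonneg.2 (Complex.nonneg_iff.mp hA.trace_nonneg).1
  have hfid := mul_le_mul_of_nonneg_left (re_trace_mul_le_fid_sq hA hB) ha
  simp only [RCLike.re_to_complex] at hhelstrom
  rw [traceNorm_eq_re_trace_abs]
  linarith
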